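/- arXiv:2312.13973 — 3 statements merged into one kernel-verified Lean document; each statement's English description precedes it below -/
import Mathlib

section
/- If there exists an uncountable Δ-set X ⊆ 2^ω, then there exists an uncountable strong Δ-set, i.e., an uncountable set Y ⊆ 2^ω such that for every r ∈ ℕ the finite power Y^{r+1}, viewed as a subspace of (2^ω)^{r+1} with the product topology, is a Δ-set. -/
/-- The Cantor space `2^ω`. -/
abbrev Cantor : Type := ℕ → Bool

/-- A sequence of sets is *vanishing* if it is decreasing and has empty intersection. -/
def Vanishing {α : Type*} (F : ℕ → Set α) : Prop :=
  (∀ n, F (n + 1) ⊆ F n) ∧ (⋂ n, F n) = ∅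

/-- An uncountable subset `X` of a topological space is a *Δ-set* if every vanishing
sequence of subsets of `X` admits a vanishing expansion by relatively open sets. -/
def IsDeltaSet {α : Type*} [TopologicalSpace α] (X : Set α) : Prop :=
  ¬ X.Countable ∧
    ∀ F : ℕ → Set X, Vanishing F →
      ∃ U : ℕ → Set X, (∀ n, IsOpen (U n)) ∧ Vanishing U ∧ ∀ n, F n ⊆ U n

/-!
Fix `ℵ₁` points `x_β` (`β < ω₁`) of `X`. By recursion on `β` build `y_β ∈ 2^ω` whose column `0`
(reading `2^ω` as `2^(ω × ω)`) is `x_β` and whose other columns list all `y_α` with `α < β`;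
this is possible because every `β < ω₁` has only countably many predecessors. Projection to
column `0` continuously injects `Y = {y_β}` into `X`, so `Y` inherits the Δ-property. A tuple
in `Y^(r+1)` is determined by its entry of largest index, every other entry being either equal
to it or one of its columns. This splits `Y^(r+1)` into countably many relatively closed pieces,
each continuously injected into `Y`, and in a metrizable space the Δ-property passes to such
countable unions.
-/
open Set Filter Topology TopologicalSpace

theorem vanishing_iff {α : Type*} {F : ℕ → Set α} : Vanishing F ↔ Antitone F ∧ ⋂ n, F n = ∅ :=
  and_congr_left' ⟨antitone_nat_of_succ_le, fun h n => h n.le_succ⟩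

section DeltaExpansions

variable {α β : Type*} [TopologicalSpace α] [TopologicalSpace β]

/-- The Δ-property of `S` phrased with ambient sets: open expansions only have to vanish on `S`. -/
def HasDeltaExpansions (S : Set α) : Prop :=
  ∀ F : ℕ → Set α, (∀ n, F n ⊆ S) → Antitone F → ⋂ n, F n = ∅ →
    ∃ U : ℕ → Set α, (∀ n, IsOpen (U n)) ∧ (∀ n, F n ⊆ U n) ∧ Antitone U ∧ (⋂ n, U n) ∩ S = ∅

theorem HasDeltaExpansions.preimage {S : Set β} {T : Set α} {g : α → β}
    (hS : HasDeltaExpansions S) (hg : Continuous g) (hmaps : MapsTo g T S) (hinj : InjOn g T) :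
    HasDeltaExpansions T := by
  intro F hFT hF hFempty
  have hgF : ⋂ n, g '' F n = ∅ := by
    rw [← (hinj.mono (iUnion_subset hFT)).image_iInter_eq, hFempty, image_empty]
  obtain ⟨U, hUopen, hFU, hU, hUempty⟩ :=
    hS (fun n => g '' F n) (fun n => (hmaps.mono_left (hFT n)).image_subset)
      (fun _ _ hmn => image_mono (hF hmn)) hgF
  refine ⟨fun n => g ⁻¹' U n, fun n => (hUopen n).preimage hg,
    fun n => image_subset_iff.1 (hFU n), fun _ _ hmn => preimage_mono (hU hmn), ?_⟩
  refine eq_empty_of_forall_notMem fun z ⟨hzU, hzT⟩ => ?_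
  have hgz : g z ∈ (⋂ n, U n) ∩ S := ⟨mem_iInter.2 fun n => mem_iInter.1 hzU n, hmaps hzT⟩
  simp [hUempty] at hgz

theorem HasDeltaExpansions.subtype {S : Set α} (hS : HasDeltaExpansions S) (F : ℕ → Set S)
    (hF : Vanishing F) :
    ∃ U : ℕ → Set S, (∀ n, IsOpen (U n)) ∧ Vanishing U ∧ ∀ n, F n ⊆ U n := by
  rw [vanishing_iff] at hF
  obtain ⟨U, hUopen, hFU, hU, hUempty⟩ := hS.preimage (T := univ) continuous_subtype_val
    (fun z _ => z.2) Subtype.val_injective.injOn F (fun _ => subset_univ _) hF.1 hF.2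
  exact ⟨U, hUopen, vanishing_iff.2 ⟨hU, by simpa using hUempty⟩, hFU⟩

theorem HasDeltaExpansions.of_subtype {S : Set α}
    (hS : ∀ F : ℕ → Set S, Vanishing F →
      ∃ U : ℕ → Set S, (∀ n, IsOpen (U n)) ∧ Vanishing U ∧ ∀ n, F n ⊆ U n) :
    HasDeltaExpansions S := by
  intro F hFS hF hFempty
  obtain ⟨U, hUopen, hU, hFU⟩ := hS (fun n => Subtype.val ⁻¹' F n) <| vanishing_iff.2
    ⟨fun _ _ hmn => preimage_mono (hF hmn), by simp [← preimage_iInter, hFempty]⟩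
  rw [vanishing_iff] at hU
  choose V hVopen hVU using fun n => isOpen_induced_iff.1 (hUopen n)
  -- the traces `V n` need not be decreasing, so we pass to their partial intersections
  refine ⟨fun n => ⋂ m ∈ Iic n, V m, fun n => (finite_Iic n).isOpen_biInter fun m _ => hVopen m,
    fun n z hz => mem_iInter₂.2 fun m hm => ?_, fun _ _ hmn => biInter_subset_biInter_left
      (Iic_subset_Iic.2 hmn), ?_⟩
  · have hzV : (⟨z, hFS n hz⟩ : S) ∈ U m := hFU m (hF (mem_Iic.1 hm) hz)
    rwa [← hVU] at hzV
  · refine eq_empty_of_forall_notMem fun z ⟨hzV, hzS⟩ => ?_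
    have hzU : (⟨z, hzS⟩ : S) ∈ ⋂ n, U n := mem_iInter.2 fun n => by
      rw [← hVU]; exact mem_iInter₂.1 (mem_iInter.1 hzV n) n self_mem_Iic
    simp [hU.2] at hzU

theorem isDeltaSet_iff {S : Set α} : IsDeltaSet S ↔ ¬ S.Countable ∧ HasDeltaExpansions S :=
  and_congr_right' ⟨HasDeltaExpansions.of_subtype, HasDeltaExpansions.subtype⟩

end DeltaExpansions

theorem Set.Finite.exists_forall_mem_of_antitone {ι α : Type*} {s : Set ι} (hs : s.Finite)
    {A : ι → ℕ → Set α} (hA : ∀ i ∈ s, Antitone (A i)) {z : α} (h : ∀ n, ∃ i ∈ s, z ∈ A i n) :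
    ∃ i ∈ s, ∀ n, z ∈ A i n := by
  by_contra! hout
  have hev : ∀ᶠ n in atTop, ∀ i ∈ s, z ∉ A i n := by
    refine (eventually_all_finite hs).2 fun i hi => ?_
    obtain ⟨n, hn⟩ := hout i hi
    exact eventually_atTop.2 ⟨n, fun m hmn hz => hn (hA i hi hmn hz)⟩
  obtain ⟨n, hn⟩ := hev.exists
  obtain ⟨i, hi, hz⟩ := h n
  exact hn i hi hz

theorem mem_closure_of_forall_mem_thickening_one_div {α : Type*} [PseudoMetricSpace α]
    {K : Set α} {z : α} (h : ∀ n : ℕ, z ∈ Metric.thickening (1 / (n + 1)) K) : z ∈ closure K := by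
  rw [Metric.closure_eq_iInter_thickening]
  refine mem_iInter₂.2 fun δ hδ => ?_
  obtain ⟨n, hn⟩ := exists_nat_one_div_lt hδ
  exact Metric.thickening_mono hn.le K (h n)

theorem HasDeltaExpansions.of_subset_iUnion {α κ : Type*} [TopologicalSpace α]
    [PseudoMetrizableSpace α] [Countable κ] {S : Set α} {K : κ → Set α}
    (hK : ∀ i, IsClosed (K i)) (hSK : S ⊆ ⋃ i, K i) (hΔ : ∀ i, HasDeltaExpansions (S ∩ K i)) :
    HasDeltaExpansions S := by
  let _ : PseudoMetricSpace α := pseudoMetrizableSpacePseudoMetric α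
  obtain ⟨enc, henc⟩ := Countable.exists_injective_nat κ
  intro F hFS hF hFempty
  have hW : ∀ i, ∃ W : ℕ → Set α, (∀ n, IsOpen (W n)) ∧ (∀ n, F n ∩ K i ⊆ W n) ∧
      Antitone W ∧ (⋂ n, W n) ∩ (S ∩ K i) = ∅ := fun i =>
    hΔ i (fun n => F n ∩ K i) (fun n => inter_subset_inter_left _ (hFS n))
      (fun _ _ hmn => inter_subset_inter_left _ (hF hmn))
      (subset_empty_iff.1 (hFempty ▸ iInter_mono fun n => inter_subset_left))
  choose W hWopen hFW hW hWempty using hW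
  -- A point is assigned to the first piece containing it; the thickenings force a point lying
  -- in `A i n` for all `n` into the closed piece `K i`.
  let A : κ → ℕ → Set α := fun i n =>
    (W i n ∩ Metric.thickening (1 / (n + 1)) (K i)) \ ⋃ j ∈ enc ⁻¹' Iio (enc i), K j
  have hA : ∀ i, Antitone (A i) := fun i m n hmn =>
    sdiff_subset_sdiff_left (inter_subset_inter (hW i hmn) (Metric.thickening_mono
      (one_div_le_one_div_of_le (Nat.cast_add_one_pos m) (by gcongr)) _))
  refine ⟨fun n => ⋃ i, A i n, fun n => isOpen_iUnion fun i => ((hWopen i n).inter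
      Metric.isOpen_thickening).sdiff
      (((finite_Iio _).preimage henc.injOn).isClosed_biUnion fun j _ => hK j),
    fun n z hz => ?_, fun _ _ hmn => iUnion_mono fun i => hA i hmn, ?_⟩
  · obtain ⟨i, hi, hmin⟩ := (InvImage.wf enc wellFounded_lt).has_min {i | z ∈ K i}
      (mem_iUnion.1 (hSK (hFS n hz)))
    refine mem_iUnion.2 ⟨i, ⟨hFW i n ⟨hz, hi⟩, Metric.self_subset_thickening
      (by positivity) _ hi⟩, ?_⟩
    simp only [mem_iUnion, not_exists]
    exact fun j hj hzj => hmin j hzj hj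
  · refine eq_empty_of_forall_notMem fun z ⟨hzU, hzS⟩ => ?_
    obtain ⟨i, hi⟩ := mem_iUnion.1 (hSK hzS)
    have hle : ∀ n, ∃ j ∈ enc ⁻¹' Iic (enc i), z ∈ A j n := fun n => by
      obtain ⟨j, hj⟩ := mem_iUnion.1 (mem_iInter.1 hzU n)
      have hji : enc j ≤ enc i := not_lt.1 fun hij => hj.2 (mem_biUnion hij hi)
      exact ⟨j, hji, hj⟩
    obtain ⟨j, -, hj⟩ :=
      ((finite_Iic (enc i)).preimage henc.injOn).exists_forall_mem_of_antitone (fun j _ => hA j) hle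
    have hzK : z ∈ K j := (hK j).closure_subset (mem_closure_of_forall_mem_thickening_one_div
      fun n => (hj n).1.2)
    have hzW : z ∈ (⋂ n, W j n) ∩ (S ∩ K j) := ⟨mem_iInter.2 fun n => (hj n).1.1, hzS, hzK⟩
    simp [hWempty j] at hzW

theorem HasDeltaExpansions.pi {ι α : Type*} [Finite ι] [TopologicalSpace α]
    [MetrizableSpace α] {Y : Set α} (hY : HasDeltaExpansions Y) {Φ : Set (α → α)}
    (hΦ : Φ.Countable) (hΦcont : ∀ φ ∈ Φ, Continuous φ)
    (hdom : ∀ g : ι → α, (∀ i, g i ∈ Y) → ∃ i₀, ∀ j, ∃ φ ∈ Φ, g j = φ (g i₀)) :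
    HasDeltaExpansions {g : ι → α | ∀ i, g i ∈ Y} := by
  have := hΦ.to_subtype
  refine HasDeltaExpansions.of_subset_iUnion
    (K := fun p : ι × (ι → Φ) => {g | ∀ j, g j = (p.2 j : α → α) (g p.1)})
    (fun p => ?_) (fun g hg => ?_) (fun p => ?_)
  · simp only [ofPred_forall]
    exact isClosed_iInter fun j =>
      isClosed_eq (continuous_apply j) ((hΦcont _ (p.2 j).2).comp (continuous_apply p.1))
  · obtain ⟨i₀, hi₀⟩ := hdom g hg
    choose φ hφ hgφ using hi₀
    exact mem_iUnion.2 ⟨(i₀, fun j => ⟨φ j, hφ j⟩), hgφ⟩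
  · refine hY.preimage (continuous_apply p.1) (fun g hg => hg.1 p.1) fun g hg g' hg' hgg' => ?_
    funext j
    rw [hg.2 j, hg'.2 j]
    exact congrArg _ hgg'

def column (m : ℕ) (y : Cantor) : Cantor := fun n => y (Nat.pair m n)

theorem continuous_column (m : ℕ) : Continuous (column m) :=
  continuous_pi fun n => continuous_apply (Nat.pair m n)

section Coding

variable {ι : Type*} [Preorder ι] [WellFoundedLT ι]

open Classical in
noncomputable def codingFamily (x : ι → Cantor) (e : ι → ℕ → ι) : ι → Cantor :=
  wellFounded_lt.fix fun b rec k =>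
    match (Nat.unpair k).1 with
    | 0 => x b (Nat.unpair k).2
    | m + 1 => if h : e b m < b then rec (e b m) h (Nat.unpair k).2 else false

theorem column_zero_codingFamily (x : ι → Cantor) (e : ι → ℕ → ι) (b : ι) :
    column 0 (codingFamily x e b) = x b := by
  funext n
  rw [column, codingFamily, WellFounded.fix_eq]
  simp

theorem column_succ_codingFamily (x : ι → Cantor) (e : ι → ℕ → ι) {b : ι} {m : ℕ}
    (h : e b m < b) : column (m + 1) (codingFamily x e b) = codingFamily x e (e b m) := by
  funext n
  rw [column, codingFamily, WellFounded.fix_eq]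
  simp [h]

theorem exists_column_coding (hι : ∀ b : ι, (Iio b).Countable) (x : ι → Cantor) :
    ∃ y : ι → Cantor, (∀ b, column 0 (y b) = x b) ∧
      ∀ a b, a < b → ∃ m, column (m + 1) (y b) = y a := by
  have he : ∀ b : ι, ∃ e : ℕ → ι, Iio b ⊆ range e := fun b =>
    have : Nonempty ι := ⟨b⟩
    countable_iff_exists_subset_range.1 (hι b)
  choose e he using he
  refine ⟨codingFamily x e, column_zero_codingFamily x e, fun a b hab => ?_⟩
  obtain ⟨m, hm⟩ := he b hab
  exact ⟨m, hm ▸ column_succ_codingFamily x e (hm ▸ hab)⟩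

end Coding

theorem exists_eq_column_of_forall_mem_range {ι κ : Type*} [LinearOrder ι] [Finite κ]
    [Nonempty κ] {y : ι → Cantor} (hy : ∀ a b, a < b → ∃ m, column (m + 1) (y b) = y a)
    (g : κ → Cantor) (hg : ∀ i, g i ∈ range y) :
    ∃ i₀, ∀ j, ∃ φ ∈ insert id (range fun m => column (m + 1)), g j = φ (g i₀) := by
  choose a ha using hg
  obtain ⟨i₀, hi₀⟩ := Finite.exists_max a
  refine ⟨i₀, fun j => (hi₀ j).lt_or_eq.elim (fun hlt => ?_) fun heq => ⟨id, mem_insert _ _, ?_⟩⟩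
  · obtain ⟨m, hm⟩ := hy _ _ hlt
    exact ⟨_, mem_insert_of_mem _ (mem_range_self m), by rw [← ha, ← ha, hm]⟩
  · rw [← ha, ← ha, heq, id]

section OmegaOne

universe u

open Cardinal

theorem Cardinal.mk_toType_ord_aleph_one : #(ℵ₁ : Cardinal.{u}).ord.ToType = ℵ₁ := by
  simp

theorem Cardinal.uncountable_toType_ord_aleph_one : Uncountable (ℵ₁ : Cardinal.{u}).ord.ToType :=
  aleph0_lt_mk_iff.1 (by rw [mk_toType_ord_aleph_one]; exact aleph0_lt_aleph_one)

theorem Cardinal.countable_Iio_toType_ord_aleph_one (b : (ℵ₁ : Cardinal.{u}).ord.ToType) :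
    (Iio b).Countable := by
  have hlt := mk_Iio_lt b (by rw [mk_toType_ord_aleph_one]; exact (Ordinal.type_toType _).symm)
  rw [mk_toType_ord_aleph_one, lt_aleph_one_iff] at hlt
  exact le_aleph0_iff_set_countable.1 hlt

theorem Cardinal.nonempty_toType_ord_aleph_one_embedding_of_not_countable {α : Type u} {X : Set α}
    (hX : ¬ X.Countable) : Nonempty ((ℵ₁ : Cardinal.{u}).ord.ToType ↪ X) := by
  rw [← Cardinal.le_def, mk_toType_ord_aleph_one, aleph_one_le_iff, aleph0_lt_mk_iff,
    ← not_countable_iff]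
  exact fun h => hX (countable_coe_iff.1 h)

end OmegaOne

/-- If there exists an uncountable Δ-set `X ⊆ 2^ω`, then there exists an uncountable
strong Δ-set, i.e. an uncountable `Y ⊆ 2^ω` all of whose finite powers `Y^(r+1)`,
viewed as subspaces of `(2^ω)^(r+1)`, are Δ-sets. -/
theorem exists_strong_delta_set_of_exists_delta_set
    (X : Set Cantor) (hX : IsDeltaSet X) :
    ∃ Y : Set Cantor, ¬ Y.Countable ∧
      ∀ r : ℕ, IsDeltaSet {g : Fin (r + 1) → Cantor | ∀ i, g i ∈ Y} := by
  obtain ⟨hXunc, hXΔ⟩ := isDeltaSet_iff.1 hX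
  obtain ⟨x⟩ := Cardinal.nonempty_toType_ord_aleph_one_embedding_of_not_countable hXunc
  obtain ⟨y, hy0, hy⟩ :=
    exists_column_coding Cardinal.countable_Iio_toType_ord_aleph_one fun b => (x b : Cantor)
  have hinj : Function.Injective (column 0 ∘ y) := by
    simpa [Function.comp_def, hy0] using Subtype.val_injective.comp x.injective
  have hYΔ : HasDeltaExpansions (range y) := by
    refine hXΔ.preimage (continuous_column 0) ?_ hinj.injOn_range
    rintro _ ⟨b, rfl⟩
    exact hy0 b ▸ (x b).2
  have hYunc : ¬ (range y).Countable := fun hc =>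
    have := Cardinal.uncountable_toType_ord_aleph_one
    not_countable_iff.2 this (countable_univ_iff.1 (preimage_range y ▸ hc.preimage hinj.of_comp))
  refine ⟨range y, hYunc, fun r => isDeltaSet_iff.2 ⟨fun hc => hYunc ?_,
    hYΔ.pi ((countable_range _).insert id) ?_ (exists_eq_column_of_forall_mem_range hy)⟩⟩
  · exact (hc.preimage (Function.const_injective (α := Fin (r + 1)))).mono fun z hz _ => hz
  · rintro φ (rfl | ⟨m, rfl⟩)
    exacts [continuous_id, continuous_column _]
end

section
/- Let r ∈ ℕ, let i ≤ r, and let f ⊆ ω₁^{r+1} be an i-function into ω₁^r. Then there exists a countable collection B of subsets of ω₁ such that f is a countable intersection of finite unions of boxes with sides in B; that is, there exist natural numbers (m_l : l ∈ ℕ) and sets B^l_{j,j'} ∈ B (for l ∈ ℕ, j < m_l, j' ≤ r) such that f = ⋂_{l ∈ ℕ} ⋃_{j < m_l} ∏_{j' ≤ r} B^l_{j,j'}. -/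
/-!
The relation `f` is the graph `{x | x = g (x i)}` of a function `g : ω₁ → ω₁^(r+1)`.
Fix an injection `c` of `ω₁` into Cantor space `ℕ → Bool`, which exists since `ℵ₁ ≤ 𝔠`.
Then `x ∈ f` iff for every coordinate `k` and every bit `n`, the `n`-th bits of `x k` and of
`g (x i) k` agree, i.e. iff `x` lies in one of the two boxes on which both bits are `true`,
resp. both are `false`. Such a box constrains coordinate `k` through `c` and coordinate `i`
through `c ∘ (· k) ∘ g`, so its sides range over a countable family.
-/

open Cardinal Set

/-- The first uncountable ordinal `ω₁`, as a type. -/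
abbrev Omega1 : Type := (Ordinal.omega.{0} 1).ToType

/-- A relation `f ⊆ ω₁^(r+1)` is an *`i`-function into `ω₁^r`* if for every `α ∈ ω₁`
there is exactly one `(r+1)`-tuple in `f` whose `i`-th coordinate is `α`. -/
def IsIFunction {r : ℕ} (i : Fin (r + 1)) (f : Set (Fin (r + 1) → Omega1)) : Prop :=
  ∀ α : Omega1, ∃! x : Fin (r + 1) → Omega1, x ∈ f ∧ x i = α

theorem exists_injective_omega1_cantor : ∃ c : Omega1 → ℕ → Bool, Function.Injective c := by
  have h : #Omega1 ≤ #(ℕ → Bool) := by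
    rw [mk_toType, Ordinal.card_omega, mk_arrow, mk_bool, lift_two, mk_nat, lift_aleph0,
      ← continuum]
    exact aleph_one_le_continuum
  obtain ⟨e⟩ := h
  exact ⟨e, e.injective⟩

theorem IsIFunction.exists_eq_graph {r : ℕ} {i : Fin (r + 1)} {f : Set (Fin (r + 1) → Omega1)}
    (hf : IsIFunction i f) : ∃ g : Omega1 → Fin (r + 1) → Omega1, f = {x | x = g (x i)} := by
  choose g hg huniq using hf
  refine ⟨g, Set.ext fun x => ⟨fun hx => huniq (x i) x ⟨hx, rfl⟩, fun hx => ?_⟩⟩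
  rw [mem_ofPred_eq.mp hx]
  exact (hg (x i)).1

section Boxes

variable {ι α : Type*}

theorem exists_nat_indexed_inter_union_boxes {L J : Type*} [Countable L] [Nonempty L]
    [Fintype J] {B : Set (Set α)} (C : L → J → ι → Set α) (hC : ∀ l j k, C l j k ∈ B) :
    ∃ m : ℕ → ℕ, ∃ C' : ℕ → ℕ → ι → Set α,
      (∀ l j, j < m l → ∀ k, C' l j k ∈ B) ∧
      ⋂ l, ⋃ j, {x : ι → α | ∀ k, x k ∈ C l j k} =
        ⋂ l : ℕ, ⋃ j : ℕ, ⋃ (_ : j < m l), {x : ι → α | ∀ k, x k ∈ C' l j k} := by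
  obtain ⟨e, he⟩ := exists_surjective_nat L
  let d := Fintype.equivFin J
  refine ⟨fun _ => Fintype.card J,
    fun l j => if h : j < Fintype.card J then C (e l) (d.symm ⟨j, h⟩) else fun _ => ∅,
    fun l j h k => by simpa only [dif_pos h] using hC _ _ k, ?_⟩
  rw [← he.iInter_comp]
  refine iInter_congr fun l => Set.ext fun x => ?_
  simp only [mem_iUnion, mem_ofPred_eq, exists_prop]
  constructor
  · rintro ⟨j, hj⟩
    exact ⟨d j, (d j).isLt, by simpa only [dif_pos (d j).isLt, Fin.eta, d.symm_apply_apply]⟩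
  · rintro ⟨j, hj, hx⟩
    exact ⟨d.symm ⟨j, hj⟩, by simpa only [dif_pos hj] using hx⟩

variable (c : α → ℕ → Bool) (g : α → ι → α) (i : ι)

def graphBitSide (k : ι) (n : ℕ) (b : Bool) (j : ι) : Set α :=
  {a | (j = k → c a n = b) ∧ (j = i → c (g a k) n = b)}

theorem forall_mem_graphBitSide_iff {x : ι → α} {k : ι} {n : ℕ} {b : Bool} :
    (∀ j, x j ∈ graphBitSide c g i k n b j) ↔ c (x k) n = b ∧ c (g (x i) k) n = b := by
  refine ⟨fun hx => ⟨(hx k).1 rfl, (hx i).2 rfl⟩, fun hx j => ⟨?_, ?_⟩⟩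
  · rintro rfl
    exact hx.1
  · rintro rfl
    exact hx.2

theorem graph_eq_iInter_iUnion_boxes (hc : Function.Injective c) :
    {x : ι → α | x = g (x i)} =
      ⋂ p : ι × ℕ, ⋃ b : Bool, {x | ∀ j, x j ∈ graphBitSide c g i p.1 p.2 b j} := by
  ext x
  simp only [mem_ofPred_eq, mem_iInter, mem_iUnion, forall_mem_graphBitSide_iff, Prod.forall,
    exists_eq_left', funext_iff]
  exact forall_congr' fun k => by rw [eq_comm, ← hc.eq_iff, funext_iff]

end Boxes

/-- Every `i`-function into `ω₁^r` is a countable intersection of finite unions of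
boxes with sides in some countable collection `B` of subsets of `ω₁`. -/
theorem iFunction_eq_inter_union_boxes (r : ℕ) (i : Fin (r + 1))
    (f : Set (Fin (r + 1) → Omega1)) (hf : IsIFunction i f) :
    ∃ B : Set (Set Omega1), B.Countable ∧
      ∃ m : ℕ → ℕ, ∃ C : ℕ → ℕ → Fin (r + 1) → Set Omega1,
        (∀ l j, j < m l → ∀ j' : Fin (r + 1), C l j j' ∈ B) ∧
        f = ⋂ l : ℕ, ⋃ j : ℕ, ⋃ (_ : j < m l),
          {x : Fin (r + 1) → Omega1 | ∀ j' : Fin (r + 1), x j' ∈ C l j j'} := by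
  obtain ⟨g, rfl⟩ := hf.exists_eq_graph
  obtain ⟨c, hc⟩ := exists_injective_omega1_cantor
  let side : (Fin (r + 1) × ℕ) → Bool → Fin (r + 1) → Set Omega1 :=
    fun p b => graphBitSide c g i p.1 p.2 b
  obtain ⟨m, C, hCB, hC⟩ := exists_nat_indexed_inter_union_boxes side
    (B := range fun q : (Fin (r + 1) × ℕ) × Bool × Fin (r + 1) => side q.1 q.2.1 q.2.2)
    fun p b j => ⟨(p, b, j), rfl⟩
  exact ⟨_, countable_range _, m, C, hCB, (graph_eq_iInter_iUnion_boxes c g i hc).trans hC⟩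
end

section
/- For every r ∈ ℕ there exists a countable family (f^i_n : n ∈ ℕ, i ≤ r) of relations on ω₁^{r+1}, where each f^i_n is an i-function into ω₁^r, such that ω₁^{r+1} = ⋃_{i ≤ r} ⋃_{n ∈ ℕ} f^i_n. -/
open Set

section

variable {α : Type*} {r : ℕ}

def graphAt (i : Fin (r + 1)) (φ : α → Fin r → α) : Set (Fin (r + 1) → α) :=
  {x | Fin.removeNth i x = φ (x i)}

theorem existsUnique_mem_graphAt_apply_eq (i : Fin (r + 1)) (φ : α → Fin r → α) (a : α) :
    ∃! x, x ∈ graphAt i φ ∧ x i = a := by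
  refine ⟨Fin.insertNth i a (φ a), ⟨?_, Fin.insertNth_apply_same ..⟩, ?_⟩
  · simp [graphAt]
  · rintro x ⟨hx, rfl⟩
    rw [← hx, Fin.insertNth_self_removeNth]

theorem exists_forall_removeNth_le_apply [LinearOrder α] (x : Fin (r + 1) → α) :
    ∃ i, ∀ j, Fin.removeNth i x j ≤ x i := by
  obtain ⟨i, hi⟩ := Finite.exists_max x
  exact ⟨i, fun j => hi _⟩

theorem iUnion_graphAt_eq_univ [LinearOrder α] (e : α → ℕ → Fin r → α)
    (he : ∀ β, univ.pi (fun _ => Iic β) ⊆ range (e β)) :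
    ⋃ i, ⋃ n, graphAt i (fun a => e a n) = univ := by
  refine eq_univ_of_forall fun x => ?_
  obtain ⟨i, hi⟩ := exists_forall_removeNth_le_apply x
  obtain ⟨n, hn⟩ := he (x i) (mem_univ_pi.2 hi)
  exact mem_iUnion₂.2 ⟨i, n, hn.symm⟩

theorem exists_pi_Iic_subset_range [Preorder α] (hα : ∀ β : α, (Iic β).Countable) :
    ∃ e : α → ℕ → Fin r → α, ∀ β, univ.pi (fun _ => Iic β) ⊆ range (e β) := by
  have h β : ∃ e : ℕ → Fin r → α, univ.pi (fun _ => Iic β) ⊆ range e :=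
    haveI : Nonempty α := ⟨β⟩
    countable_iff_exists_subset_range.1 (countable_univ_pi fun _ => hα β)
  choose e he using h
  exact ⟨e, he⟩

end

theorem Omega1.countable_Iic (β : Omega1) : (Iic β).Countable := by
  have hcard : Cardinal.mk (Iio β) < Cardinal.aleph 1 := by
    simpa using Cardinal.mk_Iio_lt β (by simp)
  rw [← Iio_insert]
  exact (Cardinal.le_aleph0_iff_set_countable.1 (Cardinal.lt_aleph_one_iff.1 hcard)).insert β

/-- For every `r` there is a countable family `(f i n : n ∈ ℕ, i ≤ r)` of
`i`-functions into `ω₁^r` whose union is all of `ω₁^(r+1)`. -/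
theorem exists_countable_cover_by_iFunctions (r : ℕ) :
    ∃ f : Fin (r + 1) → ℕ → Set (Fin (r + 1) → Omega1),
      (∀ (i : Fin (r + 1)) (n : ℕ), IsIFunction i (f i n)) ∧
      (⋃ i : Fin (r + 1), ⋃ n : ℕ, f i n) = Set.univ := by
  obtain ⟨e, he⟩ := exists_pi_Iic_subset_range (r := r) Omega1.countable_Iic
  exact ⟨fun i n => graphAt i (fun a => e a n),
    fun i n => existsUnique_mem_graphAt_apply_eq i _, iUnion_graphAt_eq_univ e he⟩
end
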